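/- Let ζ₀ satisfy ω_m(ζ₀) = 0, ζ₀ ∉ {z_{ν+1},…,z_λ}, and C_{ν+1} ≠ 0. Then for n ∈ Λ_m, V_{n+λ}(ζ₀) = z_{ν+1}^{n+λ}·D(ζ₀)·[C_{ν+1}/(ζ₀−z_{ν+1}) + o(1)] as n → ∞; in particular z_{ν+1}^{−(n+λ)}·V_{n+λ}(ζ₀) converges to D(ζ₀)·C_{ν+1}/(ζ₀−z_{ν+1}) ≠ 0, so V_{n+λ}(ζ₀) ≠ 0 for all sufficiently large n ∈ Λ_m. -/

import Mathlib

/-! Since `ζ₀` is no pole, `∏_{i ≠ j} (ζ₀ - z_i) = D(ζ₀) / (ζ₀ - z_j)`, so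
`V_k(ζ₀) = D(ζ₀) · ∑_j C_j z_j^k / (ζ₀ - z_j)`, and `ω_m(ζ₀)` is a nonzero multiple of the
dominant part `∑_{j ≤ ν} C_j z_j^m / (ζ₀ - z_j)` of this sum at `k = m`. For `k ≡ m (mod σ)` every
dominant term is rescaled by the same factor `(z₁^σ)^((k - m)/σ)`, so `ω_m(ζ₀) = 0` makes the
whole dominant part vanish, and the single largest remaining pole `z_{ν+1}` takes over.
That `ζ₀` is not a dominant pole either follows from
`ω_m(z_j) = C_j z_j^m ∏_{i ≠ j} (z_j - z_i) ≠ 0`.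
(In the Lean statement the poles are indexed from `0`, so `z_{ν+1}` is `z ⟨nu, _⟩`.) -/

open Polynomial Finset Filter Topology

theorem eval_sum_C_mul_prod_erase {ι R : Type*} [DecidableEq ι] [CommRing R] (s : Finset ι)
    (a z : ι → R) (ζ : R) :
    (∑ k ∈ s, C (a k) * ∏ i ∈ s.erase k, (X - C (z i))).eval ζ =
      ∑ k ∈ s, a k * ∏ i ∈ s.erase k, (ζ - z i) := by
  simp [eval_finsetSum, eval_prod]

theorem eval_prod_X_sub_C_ne_zero {ι R : Type*} [CommRing R] [IsDomain R] {s : Finset ι}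
    {z : ι → R} {ζ : R} (hζ : ∀ i ∈ s, ζ ≠ z i) : (∏ i ∈ s, (X - C (z i))).eval ζ ≠ 0 := by
  simpa [eval_prod, prod_ne_zero_iff, sub_eq_zero] using hζ

theorem ne_of_eval_sum_C_mul_prod_erase_eq_zero {ι R : Type*} [DecidableEq ι] [CommRing R]
    [IsDomain R] {s : Finset ι} {a z : ι → R} {ζ : R} (hz : Set.InjOn z s) (ha : ∀ j ∈ s, a j ≠ 0)
    (h : (∑ k ∈ s, C (a k) * ∏ i ∈ s.erase k, (X - C (z i))).eval ζ = 0)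
    {j : ι} (hj : j ∈ s) : ζ ≠ z j := by
  rintro rfl
  rw [eval_sum_C_mul_prod_erase, Finset.sum_eq_single_of_mem j hj fun k hk hkj =>
    by rw [Finset.prod_eq_zero (mem_erase.2 ⟨hkj.symm, hj⟩) (sub_self _), mul_zero]] at h
  refine mul_ne_zero (ha j hj) (prod_ne_zero_iff.2 fun i hi => sub_ne_zero.2 fun hji => ?_) h
  exact (mem_erase.1 hi).1 (hz (mem_erase.1 hi).2 hj hji.symm)

theorem eval_sum_C_mul_prod_erase_eq_mul_sum_div {ι K : Type*} [DecidableEq ι] [Field K]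
    {s : Finset ι} {z : ι → K} {ζ : K} (hζ : ∀ i ∈ s, ζ ≠ z i) (a : ι → K) :
    (∑ k ∈ s, C (a k) * ∏ i ∈ s.erase k, (X - C (z i))).eval ζ =
      (∏ i ∈ s, (X - C (z i))).eval ζ * ∑ k ∈ s, a k / (ζ - z k) := by
  rw [eval_sum_C_mul_prod_erase, eval_prod, mul_sum]
  refine sum_congr rfl fun k hk => ?_
  simp only [eval_sub, eval_X, eval_C]
  rw [← mul_prod_erase s _ hk]
  field_simp [sub_ne_zero.2 (hζ k hk)]

theorem pow_eq_pow_mul_pow_of_modEq {M : Type*} [Monoid M] {x r : M} {σ m k : ℕ}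
    (hx : x ^ σ = r) (hmk : m ≤ k) (h : k ≡ m [MOD σ]) :
    x ^ k = r ^ ((k - m) / σ) * x ^ m := by
  have hdvd : σ ∣ k - m := (Nat.modEq_iff_dvd' hmk).1 h.symm
  conv_lhs => rw [← Nat.sub_add_cancel hmk, ← Nat.mul_div_cancel' hdvd]
  rw [pow_add, pow_mul, hx]

theorem sum_mul_pow_eq_pow_mul_sum_of_modEq {R ι : Type*} [CommSemiring R] {s : Finset ι}
    {c x : ι → R} {r : R} {σ m k : ℕ} (hx : ∀ j ∈ s, x j ^ σ = r) (hmk : m ≤ k)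
    (h : k ≡ m [MOD σ]) :
    ∑ j ∈ s, c j * x j ^ k = r ^ ((k - m) / σ) * ∑ j ∈ s, c j * x j ^ m := by
  rw [mul_sum]
  refine sum_congr rfl fun j hj => ?_
  rw [pow_eq_pow_mul_pow_of_modEq (hx j hj) hmk h, mul_left_comm]

theorem tendsto_inv_pow_mul_sum_mul_pow {𝕜 ι : Type*} [NormedField 𝕜] [DecidableEq ι]
    {s : Finset ι} {c x : ι → 𝕜} {j₀ : ι} (hj₀ : j₀ ∈ s) (hx : x j₀ ≠ 0)
    (hlt : ∀ j ∈ s, j ≠ j₀ → ‖x j‖ < ‖x j₀‖) :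
    Tendsto (fun n : ℕ => (x j₀)⁻¹ ^ n * ∑ j ∈ s, c j * x j ^ n) atTop (𝓝 (c j₀)) := by
  have hterm : ∀ j ∈ s, Tendsto (fun n : ℕ => c j * (x j / x j₀) ^ n) atTop
      (𝓝 (if j = j₀ then c j₀ else 0)) := by
    intro j hj
    split_ifs with hjj
    · simp [hjj, div_self hx]
    · have hnorm : ‖x j / x j₀‖ < 1 := by
        rw [norm_div, div_lt_one (norm_pos_iff.2 hx)]
        exact hlt j hj hjj
      simpa using (tendsto_pow_atTop_nhds_zero_of_norm_lt_one hnorm).const_mul (c j)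
  have hsum := tendsto_finsetSum s hterm
  rw [sum_ite_eq' s j₀, if_pos hj₀] at hsum
  refine hsum.congr fun n => ?_
  rw [mul_sum]
  refine sum_congr rfl fun j _ => ?_
  rw [div_pow, inv_pow]
  ring

theorem tendsto_inv_pow_mul_sum_mul_pow_of_modEq {𝕜 ι : Type*} [NormedField 𝕜] [Fintype ι]
    [DecidableEq ι] {p : ι → Prop} [DecidablePred p] {c x : ι → 𝕜} {r : 𝕜} {σ m : ℕ} {j₀ : ι}
    (hroot : ∀ j, p j → x j ^ σ = r) (hcancel : ∑ j ∈ univ.filter p, c j * x j ^ m = 0)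
    (hj₀ : ¬ p j₀) (hx : x j₀ ≠ 0) (hlt : ∀ j, ¬ p j → j ≠ j₀ → ‖x j‖ < ‖x j₀‖) :
    Tendsto (fun k : ℕ => (x j₀)⁻¹ ^ k * ∑ j, c j * x j ^ k)
      (atTop ⊓ 𝓟 {k | k ≡ m [MOD σ]}) (𝓝 (c j₀)) := by
  have hvanish : ∀ᶠ k in atTop ⊓ 𝓟 {k | k ≡ m [MOD σ]},
      ∑ j ∈ univ.filter p, c j * x j ^ k = 0 := by
    filter_upwards [(eventually_ge_atTop m).filter_mono inf_le_left,
      eventually_inf_principal.2 (Eventually.of_forall fun k hk => hk)] with k hmk hk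
    rw [sum_mul_pow_eq_pow_mul_sum_of_modEq (fun j hj => hroot j (mem_filter.1 hj).2) hmk hk,
      hcancel, mul_zero]
  refine ((tendsto_inv_pow_mul_sum_mul_pow (mem_filter.2 ⟨mem_univ j₀, hj₀⟩) hx
    fun j hj => hlt j (mem_filter.1 hj).2).mono_left inf_le_left).congr' ?_
  filter_upwards [hvanish] with k hk
  rw [← sum_filter_add_sum_filter_not univ p, hk, zero_add]

/-- At an additional limit point `ζ₀` (a zero of `ω_m` distinct from the nondominant
poles), along `Λ_m` one has
`z_{ν+1}^{-(n+λ)} V_{n+λ}(ζ₀) → D(ζ₀)·C_{ν+1}/(ζ₀−z_{ν+1}) ≠ 0`,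
hence `V_{n+λ}(ζ₀) ≠ 0` for all sufficiently large `n ∈ Λ_m`. -/
theorem stmt6 (lam nu sig mm : ℕ) (hnul : nu + 1 < lam)
    (z Cc : Fin lam → ℂ) (hz : Function.Injective z)
    (hC : ∀ j, Cc j ≠ 0)
    (hmod : ∀ j : Fin lam, (j : ℕ) < nu →
      ‖z j‖ = ‖z ⟨0, by omega⟩‖)
    (hroot : ∀ j : Fin lam, (j : ℕ) < nu → z j ^ sig = z ⟨0, by omega⟩ ^ sig)
    (hdrop : ∀ j : Fin lam, nu ≤ (j : ℕ) →
      ‖z j‖ < ‖z ⟨0, by omega⟩‖)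
    (hdrop1 : ∀ j : Fin lam, nu + 1 ≤ (j : ℕ) →
      ‖z j‖ < ‖z ⟨nu, by omega⟩‖)
    (ζ₀ : ℂ) (hζ : ∀ j : Fin lam, nu ≤ (j : ℕ) → ζ₀ ≠ z j) :
    let D : Polynomial ℂ := ∏ i, (Polynomial.X - Polynomial.C (z i))
    let Dj : Fin lam → Polynomial ℂ :=
      fun j => ∏ i ∈ Finset.univ.erase j, (Polynomial.X - Polynomial.C (z i))
    let V : ℕ → Polynomial ℂ := fun k => ∑ j, Polynomial.C (Cc j * z j ^ k) * Dj j
    let dom : Finset (Fin lam) := Finset.univ.filter (fun j => (j : ℕ) < nu)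
    let ω : Polynomial ℂ := ∑ k ∈ dom, Polynomial.C (Cc k * z k ^ mm) *
      ∏ i ∈ dom.erase k, (Polynomial.X - Polynomial.C (z i))
    let Λ : Filter ℕ := atTop ⊓ Filter.principal {n | (n + lam) % sig = mm % sig}
    ω.eval ζ₀ = 0 →
    (Tendsto (fun n : ℕ => (z ⟨nu, by omega⟩)⁻¹ ^ (n + lam) * (V (n + lam)).eval ζ₀)
        Λ (𝓝 (D.eval ζ₀ * Cc ⟨nu, by omega⟩ / (ζ₀ - z ⟨nu, by omega⟩))) ∧
      D.eval ζ₀ * Cc ⟨nu, by omega⟩ / (ζ₀ - z ⟨nu, by omega⟩) ≠ 0 ∧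
      ∀ᶠ n in Λ, (V (n + lam)).eval ζ₀ ≠ 0) := by
  intro D Dj V dom ω Λ hω
  set ν : Fin lam := ⟨nu, by omega⟩
  have hz_ne : ∀ j ∈ dom, z j ≠ 0 := fun j hj => norm_pos_iff.1
    (((norm_nonneg _).trans_lt (hdrop ν le_rfl)).trans_eq (hmod j (mem_filter.1 hj).2).symm)
  have hζ_ne : ∀ j, ζ₀ ≠ z j := fun j =>
    if hj : (j : ℕ) < nu then
      ne_of_eval_sum_C_mul_prod_erase_eq_zero hz.injOn
        (fun k hk => mul_ne_zero (hC k) (pow_ne_zero _ (hz_ne k hk))) hω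
        (mem_filter.2 ⟨mem_univ j, hj⟩)
    else hζ j (not_lt.1 hj)
  set c : Fin lam → ℂ := fun j => Cc j / (ζ₀ - z j)
  have hV : ∀ k, (V k).eval ζ₀ = D.eval ζ₀ * ∑ j, c j * z j ^ k := fun k => by
    simp only [V, Dj, D, eval_sum_C_mul_prod_erase_eq_mul_sum_div (fun i _ => hζ_ne i), c,
      mul_div_right_comm]
  have hωc : ∑ j ∈ dom, c j * z j ^ mm = 0 := by
    rw [eval_sum_C_mul_prod_erase_eq_mul_sum_div (fun i _ => hζ_ne i)] at hω
    simpa only [c, mul_div_right_comm] using (mul_eq_zero.1 hω).resolve_left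
      (eval_prod_X_sub_C_ne_zero fun i _ => hζ_ne i)
  have hzν : z ν ≠ 0 := norm_pos_iff.1 ((norm_nonneg _).trans_lt (hdrop1 ⟨nu + 1, hnul⟩ le_rfl))
  have hshift : Tendsto (· + lam) Λ (atTop ⊓ 𝓟 {k | k ≡ mm [MOD sig]}) :=
    tendsto_inf.2 ⟨(tendsto_add_atTop_nat lam).mono_left inf_le_left,
      tendsto_principal.2 (eventually_inf_principal.2 (Eventually.of_forall fun n hn => hn))⟩
  have hmain : Tendsto (fun n : ℕ => (z ν)⁻¹ ^ (n + lam) * (V (n + lam)).eval ζ₀) Λ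
      (𝓝 (D.eval ζ₀ * Cc ν / (ζ₀ - z ν))) := by
    simp only [hV, mul_left_comm _ (D.eval ζ₀), mul_div_assoc]
    refine ((tendsto_inv_pow_mul_sum_mul_pow_of_modEq hroot hωc (lt_irrefl nu) hzν
      fun j hj hjν => hdrop1 j ?_).comp hshift).const_mul _
    have : (j : ℕ) ≠ nu := Fin.val_ne_of_ne hjν
    omega
  have hL : D.eval ζ₀ * Cc ν / (ζ₀ - z ν) ≠ 0 :=
    div_ne_zero (mul_ne_zero (eval_prod_X_sub_C_ne_zero fun i _ => hζ_ne i) (hC ν))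
      (sub_ne_zero.2 (hζ_ne ν))
  exact ⟨hmain, hL, (hmain.eventually_ne hL).mono fun n hn hV0 => hn (by rw [hV0, mul_zero])⟩
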